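/- arXiv:2509.11737 — 4 statements merged into one kernel-verified Lean document; each statement's English description precedes it below -/
import Mathlib

section
/- Let α ∈ (0, 1/2) and let 0 < v < u. Then ∫_0^v x^{−2α} (u − x)^{α−1} (v − x)^{α−1} dx = B(α, 1 − 2α) · (uv)^{−α} · (u − v)^{2α−1}, where B(·,·) denotes the Euler Beta function. -/
open MeasureTheory

/-- The Euler Beta function, `B(a,b) = Γ(a)Γ(b)/Γ(a+b)`. -/
noncomputable def eulerBeta (a b : ℝ) : ℝ := Real.Gamma a * Real.Gamma b / Real.Gamma (a + b)

/-!
Substitute `x = uv(1 - t)/(u - tv)`, a Möbius map taking `(0, 1)` onto `(0, v)`. With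
`D = u - tv` one gets `x = uv(1 - t)/D`, `u - x = u(u - v)/D`, `v - x = tv(u - v)/D` and
`|dx/dt| = uv(u - v)/D²`. The powers of `D` cancel (`-2 + 2α + 2(1 - α) = 0`), leaving
`(uv)^{-α} (u - v)^{2α-1}` times the Beta integrand `t^{α-1} (1 - t)^{-2α}` on `(0, 1)`.
-/

open Set

theorem setIntegral_Ioo_rpow_mul_one_sub_rpow {a b : ℝ} (ha : 0 < a) (hb : 0 < b) :
    ∫ t in Ioo (0 : ℝ) 1, t ^ (a - 1) * (1 - t) ^ (b - 1) = eulerBeta a b := by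
  have hcast : Complex.betaIntegral a b =
      ((∫ t in (0 : ℝ)..1, t ^ (a - 1) * (1 - t) ^ (b - 1) : ℝ) : ℂ) := by
    rw [Complex.betaIntegral, ← intervalIntegral.integral_ofReal]
    refine intervalIntegral.integral_congr fun t ht => ?_
    rw [uIcc_of_le zero_le_one] at ht
    simp only [Complex.ofReal_mul, Complex.ofReal_cpow ht.1,
      Complex.ofReal_cpow (sub_nonneg.2 ht.2)]
    push_cast
    rfl
  rw [← integral_Ioc_eq_integral_Ioo, ← intervalIntegral.integral_of_le zero_le_one,
    show eulerBeta a b = ProbabilityTheory.beta a b from rfl,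
    ProbabilityTheory.beta_eq_betaIntegralReal a b ha hb, hcast, Complex.ofReal_re]

section MoebiusSubst

variable {u v t : ℝ}

noncomputable def moebiusSubst (u v t : ℝ) : ℝ := u * v * (1 - t) / (u - t * v)

noncomputable def moebiusSubstInv (u v x : ℝ) : ℝ := u * (v - x) / (v * (u - x))

lemma sub_mul_pos_of_le_one (hv : 0 ≤ v) (huv : v < u) (ht : t ≤ 1) : 0 < u - t * v := by
  nlinarith

lemma fst_sub_moebiusSubst (hD : u - t * v ≠ 0) :
    u - moebiusSubst u v t = u * (u - v) / (u - t * v) := by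
  rw [moebiusSubst, eq_div_iff hD, sub_mul, div_mul_cancel₀ _ hD]; ring

lemma snd_sub_moebiusSubst (hD : u - t * v ≠ 0) :
    v - moebiusSubst u v t = t * v * (u - v) / (u - t * v) := by
  rw [moebiusSubst, eq_div_iff hD, sub_mul, div_mul_cancel₀ _ hD]; ring

lemma hasDerivAt_moebiusSubst (hD : u - t * v ≠ 0) :
    HasDerivAt (moebiusSubst u v) (-(u * v * (u - v) / (u - t * v) ^ 2)) t := by
  have hnum : HasDerivAt (fun t => u * v * (1 - t)) (-(u * v)) t := by
    simpa using ((hasDerivAt_id t).const_sub 1).const_mul (u * v)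
  have hden : HasDerivAt (fun t => u - t * v) (-v) t := by
    simpa using ((hasDerivAt_id t).mul_const v).const_sub u
  exact (hnum.div hden hD).congr_deriv (by ring)

variable (hv : 0 < v) (huv : v < u)
include hv huv

lemma mapsTo_moebiusSubst : MapsTo (moebiusSubst u v) (Ioo 0 1) (Ioo 0 v) := by
  rintro t ⟨ht0, ht1⟩
  have hD := sub_mul_pos_of_le_one hv.le huv ht1.le
  have h1t : 0 < 1 - t := by linarith
  have hu : 0 < u := hv.trans huv
  refine ⟨div_pos (by positivity) hD, ?_⟩
  rw [moebiusSubst, div_lt_iff₀ hD]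
  nlinarith [mul_pos (mul_pos ht0 hv) (sub_pos.2 huv)]

lemma mapsTo_moebiusSubstInv : MapsTo (moebiusSubstInv u v) (Ioo 0 v) (Ioo 0 1) := by
  rintro x ⟨hx0, hxv⟩
  have hden : 0 < v * (u - x) := by nlinarith
  refine ⟨div_pos (by nlinarith) hden, ?_⟩
  rw [moebiusSubstInv, div_lt_one hden]
  nlinarith

lemma invOn_moebiusSubst :
    InvOn (moebiusSubstInv u v) (moebiusSubst u v) (Ioo 0 1) (Ioo 0 v) := by
  constructor
  · intro t ht
    have hD := sub_mul_pos_of_le_one hv.le huv ht.2.le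
    have : u - v ≠ 0 := by linarith
    have : u ≠ 0 := by linarith
    rw [moebiusSubstInv, fst_sub_moebiusSubst hD.ne', snd_sub_moebiusSubst hD.ne']
    field_simp
  · intro x hx
    have : u - x ≠ 0 := by linarith [hx.2]
    have : u - v ≠ 0 := by linarith
    have : u ≠ 0 := by linarith
    rw [moebiusSubst, moebiusSubstInv]
    field_simp
    rw [show u - x - (v - x) = u - v by ring, div_eq_iff ‹u - v ≠ 0›]
    ring

lemma bijOn_moebiusSubst : BijOn (moebiusSubst u v) (Ioo 0 1) (Ioo 0 v) :=
  (invOn_moebiusSubst hv huv).bijOn (mapsTo_moebiusSubst hv huv) (mapsTo_moebiusSubstInv hv huv)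

lemma abs_deriv_smul_comp_moebiusSubst (α : ℝ) (ht : t ∈ Ioo 0 1) :
    |-(u * v * (u - v) / (u - t * v) ^ 2)| •
        (moebiusSubst u v t ^ (-(2 * α)) * (u - moebiusSubst u v t) ^ (α - 1) *
          (v - moebiusSubst u v t) ^ (α - 1)) =
      (u * v) ^ (-α) * (u - v) ^ (2 * α - 1) * (t ^ (α - 1) * (1 - t) ^ (1 - 2 * α - 1)) := by
  obtain ⟨ht0, ht1⟩ := ht
  have hD := sub_mul_pos_of_le_one hv.le huv ht1.le
  have hu : 0 < u := hv.trans huv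
  have huv' : 0 < u - v := sub_pos.2 huv
  have h1t : 0 < 1 - t := sub_pos.2 ht1
  rw [smul_eq_mul, abs_neg, abs_of_pos (by positivity), fst_sub_moebiusSubst hD.ne',
    snd_sub_moebiusSubst hD.ne', moebiusSubst]
  refine Real.log_injOn_pos (mem_Ioi.2 (by positivity)) (mem_Ioi.2 (by positivity)) ?_
  simp (disch := positivity) only [Real.log_mul, Real.log_div, Real.log_rpow, Real.log_pow]
  push_cast
  ring

end MoebiusSubst

/-- For `α ∈ (0,1/2)` and `0 < v < u`, one has
`∫_0^v x^{-2α} (u-x)^{α-1} (v-x)^{α-1} dx = B(α, 1-2α) (uv)^{-α} (u-v)^{2α-1}`. -/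
theorem integral_eq_beta_mul (α u v : ℝ) (hα : α ∈ Set.Ioo (0 : ℝ) (1 / 2))
    (hv : 0 < v) (huv : v < u) :
    ∫ x in Set.Ioo (0 : ℝ) v, x ^ (-(2 * α)) * (u - x) ^ (α - 1) * (v - x) ^ (α - 1) =
      eulerBeta α (1 - 2 * α) * (u * v) ^ (-α) * (u - v) ^ (2 * α - 1) := by
  have hbij := bijOn_moebiusSubst hv huv
  have hderiv (t : ℝ) (ht : t ∈ Ioo 0 1) := (hasDerivAt_moebiusSubst
    (sub_mul_pos_of_le_one hv.le huv ht.2.le).ne').hasDerivWithinAt (s := Ioo 0 1)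
  rw [← hbij.image_eq, integral_image_eq_integral_abs_deriv_smul measurableSet_Ioo hderiv
      hbij.injOn,
    setIntegral_congr_fun measurableSet_Ioo fun t => abs_deriv_smul_comp_moebiusSubst hv huv α,
    integral_const_mul, setIntegral_Ioo_rpow_mul_one_sub_rpow hα.1 (by linarith [hα.2])]
  ring
end

section
/- Let T > 0, n ∈ ℕ, p ∈ (1, ∞), and let X = (X_t)_{t∈[0,T]} and Y = (Y_t)_{t∈[0,T]} be real-valued stochastic processes on a probability space (Ω, F, P) such that E V_{n,T}^p(X) < ∞ and E V_{n,T}^p(Y) < ∞. Then E | V_{n,T}^p(X) − V_{n,T}^p(Y) | ≤ p ( E V_{n,T}^p(X − Y) )^{1/p} ( ( E V_{n,T}^p(X) )^{1 − 1/p} + ( E V_{n,T}^p(Y) )^{1 − 1/p} ). -/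
/-!
For `p ≥ 1` the tangent line of the convex function `x ↦ x ^ p` gives, pointwise,
`||u|^p - |v|^p| ≤ p |u - v| (|u|^(p-1) + |v|^(p-1))`. Summing over the dyadic increments and
applying Hölder's inequality with exponents `p` and `p / (p - 1)` to the finite sum bounds
`|V(X) - V(Y)|` by `p V(X-Y)^(1/p) (V(X)^(1-1/p) + V(Y)^(1-1/p))`. Taking expectations, Hölder's
inequality again, now in the form `E[F^(1/p) G^(1-1/p)] ≤ (E F)^(1/p) (E G)^(1-1/p)`, finishes.
-/

open MeasureTheory Finset

/-- The `p`-variation sum of a real-valued stochastic process `X` along the dyadic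
partition `t_i^n = T i 2^{-n}`, `i = 0, …, 2^n`, of `[0,T]`:
`V_{n,T}^p(X)(ω) = ∑_{i=0}^{2^n-1} |X_{t_{i+1}^n}(ω) - X_{t_i^n}(ω)|^p`. -/
noncomputable def dyadicVariation {Ω : Type*} (T p : ℝ) (n : ℕ) (X : ℝ → Ω → ℝ) (ω : Ω) : ℝ :=
  ∑ i ∈ Finset.range (2 ^ n),
    |X (T * ((i : ℝ) + 1) / 2 ^ n) ω - X (T * (i : ℝ) / 2 ^ n) ω| ^ p

namespace Real

lemma rpow_sub_rpow_le_mul_rpow_sub_one_mul {p a b : ℝ} (hp : 1 ≤ p) (ha : 0 ≤ a) (hb : 0 ≤ b) :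
    a ^ p - b ^ p ≤ p * a ^ (p - 1) * (a - b) := by
  rcases ha.eq_or_lt with rfl | ha
  · rcases hp.eq_or_lt with rfl | hp
    · simp
    · rw [zero_rpow (by linarith), zero_rpow (by linarith)]
      simp only [zero_sub, mul_zero, zero_mul, neg_nonpos]
      positivity
  · have hbern := one_add_mul_self_le_rpow_one_add (s := b / a - 1)
      (by linarith [div_nonneg hb ha.le]) hp
    rw [add_sub_cancel, div_rpow hb ha.le, le_div_iff₀ (rpow_pos_of_pos ha p)] at hbern
    have hap : (1 + p * (b / a - 1)) * a ^ p = a ^ p - p * a ^ (p - 1) * (a - b) := by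
      rw [show a ^ p = a ^ (p - 1) * a by rw [← rpow_add_one ha.ne', sub_add_cancel]]
      field_simp
      ring
    linarith

lemma abs_abs_rpow_sub_abs_rpow_le {p : ℝ} (hp : 1 ≤ p) (u v : ℝ) :
    |(|u| ^ p - |v| ^ p)| ≤ p * |u - v| * (|u| ^ (p - 1) + |v| ^ (p - 1)) := by
  have tangent : ∀ u v : ℝ, |u| ^ p - |v| ^ p ≤ p * |u - v| * |u| ^ (p - 1) := fun u v =>
    calc |u| ^ p - |v| ^ p ≤ p * |u| ^ (p - 1) * (|u| - |v|) :=
          rpow_sub_rpow_le_mul_rpow_sub_one_mul hp (abs_nonneg u) (abs_nonneg v)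
      _ ≤ p * |u| ^ (p - 1) * |u - v| := by
          gcongr
          exact abs_sub_abs_le_abs_sub u v
      _ = p * |u - v| * |u| ^ (p - 1) := by ring
  have hu : 0 ≤ p * |u - v| * |u| ^ (p - 1) := by positivity
  have hv : 0 ≤ p * |u - v| * |v| ^ (p - 1) := by positivity
  rw [abs_sub_le_iff, mul_add]
  constructor
  · linarith [tangent u v]
  · linarith [abs_sub_comm u v ▸ tangent v u]

lemma abs_sub_rpow_le_two_rpow_mul {p : ℝ} (hp : 1 ≤ p) (u v : ℝ) :
    |u - v| ^ p ≤ 2 ^ (p - 1) * (|u| ^ p + |v| ^ p) := by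
  have h := NNReal.coe_le_coe.2
    (NNReal.rpow_add_le_mul_rpow_add_rpow ⟨|u|, abs_nonneg u⟩ ⟨|v|, abs_nonneg v⟩ hp)
  push_cast at h
  exact (rpow_le_rpow (abs_nonneg _) (abs_sub u v) (by linarith)).trans h

lemma sum_abs_mul_abs_rpow_sub_one_le {ι : Type*} (s : Finset ι) {p : ℝ} (hp : 1 < p)
    (c a : ι → ℝ) :
    ∑ i ∈ s, |c i| * |a i| ^ (p - 1) ≤
      (∑ i ∈ s, |c i| ^ p) ^ (1 / p) * (∑ i ∈ s, |a i| ^ p) ^ (1 - 1 / p) := by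
  have hpq := HolderConjugate.conjExponent hp
  have h := inner_le_Lp_mul_Lq_of_nonneg s hpq (f := fun i => |c i|)
    (g := fun i => |a i| ^ (p - 1)) (fun i _ => abs_nonneg _) (fun i _ => by positivity)
  simp_rw [← rpow_mul (abs_nonneg _), hpq.sub_one_mul_conj] at h
  rwa [one_div p, hpq.one_sub_inv, ← one_div, ← one_div]

lemma abs_sum_abs_rpow_sub_sum_abs_rpow_le {ι : Type*} (s : Finset ι) {p : ℝ} (hp : 1 < p)
    (a b : ι → ℝ) :
    |∑ i ∈ s, |a i| ^ p - ∑ i ∈ s, |b i| ^ p| ≤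
      p * ((∑ i ∈ s, |a i - b i| ^ p) ^ (1 / p) * (∑ i ∈ s, |a i| ^ p) ^ (1 - 1 / p) +
        (∑ i ∈ s, |a i - b i| ^ p) ^ (1 / p) * (∑ i ∈ s, |b i| ^ p) ^ (1 - 1 / p)) :=
  calc |∑ i ∈ s, |a i| ^ p - ∑ i ∈ s, |b i| ^ p|
      = |∑ i ∈ s, (|a i| ^ p - |b i| ^ p)| := by rw [sum_sub_distrib]
    _ ≤ ∑ i ∈ s, |(|a i| ^ p - |b i| ^ p)| := abs_sum_le_sum_abs _ _
    _ ≤ ∑ i ∈ s, p * |a i - b i| * (|a i| ^ (p - 1) + |b i| ^ (p - 1)) :=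
        sum_le_sum fun i _ => abs_abs_rpow_sub_abs_rpow_le hp.le _ _
    _ = p * (∑ i ∈ s, |a i - b i| * |a i| ^ (p - 1) +
          ∑ i ∈ s, |a i - b i| * |b i| ^ (p - 1)) := by
        rw [← sum_add_distrib, mul_sum]
        exact sum_congr rfl fun i _ => by ring
    _ ≤ _ := by
        gcongr <;> exact sum_abs_mul_abs_rpow_sub_one_le s hp _ _

end Real

namespace MeasureTheory

variable {Ω : Type*} [MeasurableSpace Ω] {μ : Measure Ω}

section RpowMulRpow

variable {f g : Ω → ℝ} {a b : ℝ}

lemma Integrable.rpow_mul_rpow (hf : Integrable f μ) (hg : Integrable g μ)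
    (hf0 : 0 ≤ᵐ[μ] f) (hg0 : 0 ≤ᵐ[μ] g) (ha : 0 ≤ a) (hb : 0 ≤ b) (hab : a + b = 1) :
    Integrable (fun ω => f ω ^ a * g ω ^ b) μ := by
  refine ((hf.const_mul a).add (hg.const_mul b)).mono'
    (((Real.continuous_rpow_const ha).comp_aestronglyMeasurable hf.1).mul
      ((Real.continuous_rpow_const hb).comp_aestronglyMeasurable hg.1)) ?_
  filter_upwards [hf0, hg0] with ω hfω hgω
  rw [Real.norm_of_nonneg (mul_nonneg (Real.rpow_nonneg hfω a) (Real.rpow_nonneg hgω b))]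
  exact Real.geom_mean_le_arith_mean2_weighted ha hb hfω hgω hab

theorem integral_rpow_mul_rpow_le (hf : Integrable f μ) (hg : Integrable g μ)
    (hf0 : 0 ≤ᵐ[μ] f) (hg0 : 0 ≤ᵐ[μ] g) (ha : 0 ≤ a) (hb : 0 ≤ b) (hab : a + b = 1) :
    ∫ ω, f ω ^ a * g ω ^ b ∂μ ≤ (∫ ω, f ω ∂μ) ^ a * (∫ ω, g ω ∂μ) ^ b := by
  have hfg0 : 0 ≤ᵐ[μ] fun ω => f ω ^ a * g ω ^ b := by
    filter_upwards [hf0, hg0] with ω hfω hgω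
    exact mul_nonneg (Real.rpow_nonneg hfω a) (Real.rpow_nonneg hgω b)
  rw [integral_eq_lintegral_of_nonneg_ae hfg0 (hf.rpow_mul_rpow hg hf0 hg0 ha hb hab).1,
    integral_eq_lintegral_of_nonneg_ae hf0 hf.1, integral_eq_lintegral_of_nonneg_ae hg0 hg.1,
    ENNReal.toReal_rpow, ENNReal.toReal_rpow, ← ENNReal.toReal_mul]
  refine ENNReal.toReal_mono (ENNReal.mul_ne_top
    (ENNReal.rpow_ne_top_of_nonneg ha hf.lintegral_lt_top.ne)
    (ENNReal.rpow_ne_top_of_nonneg hb hg.lintegral_lt_top.ne)) ?_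
  refine (lintegral_congr_ae ?_).trans_le (ENNReal.lintegral_mul_norm_pow_le
    hf.1.aemeasurable.ennreal_ofReal hg.1.aemeasurable.ennreal_ofReal ha hb hab)
  filter_upwards [hf0, hg0] with ω hfω hgω
  rw [ENNReal.ofReal_mul (Real.rpow_nonneg hfω a), ENNReal.ofReal_rpow_of_nonneg hfω ha,
    ENNReal.ofReal_rpow_of_nonneg hgω hb]

end RpowMulRpow

section FinsetSum

variable {ι : Type*} (s : Finset ι) {p : ℝ} {A B : ι → Ω → ℝ}

lemma integrable_sum_abs_sub_rpow (hp : 1 ≤ p) (hA : ∀ i, AEStronglyMeasurable (A i) μ)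
    (hB : ∀ i, AEStronglyMeasurable (B i) μ)
    (hVA : Integrable (fun ω => ∑ i ∈ s, |A i ω| ^ p) μ)
    (hVB : Integrable (fun ω => ∑ i ∈ s, |B i ω| ^ p) μ) :
    Integrable (fun ω => ∑ i ∈ s, |A i ω - B i ω| ^ p) μ := by
  refine ((hVA.add hVB).const_mul (2 ^ (p - 1))).mono'
    (Finset.aestronglyMeasurable_fun_sum s fun i _ =>
      (Real.continuous_rpow_const (by linarith)).comp_aestronglyMeasurable
        ((hA i).sub (hB i)).norm) (ae_of_all _ fun ω => ?_)
  rw [Real.norm_of_nonneg (sum_nonneg fun i _ => by positivity), Pi.add_apply, ← sum_add_distrib,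
    mul_sum]
  exact sum_le_sum fun i _ => Real.abs_sub_rpow_le_two_rpow_mul hp _ _

theorem integral_abs_sum_abs_rpow_sub_le (hp : 1 < p) (hA : ∀ i, AEStronglyMeasurable (A i) μ)
    (hB : ∀ i, AEStronglyMeasurable (B i) μ)
    (hVA : Integrable (fun ω => ∑ i ∈ s, |A i ω| ^ p) μ)
    (hVB : Integrable (fun ω => ∑ i ∈ s, |B i ω| ^ p) μ) :
    ∫ ω, |∑ i ∈ s, |A i ω| ^ p - ∑ i ∈ s, |B i ω| ^ p| ∂μ ≤
      p * (∫ ω, ∑ i ∈ s, |A i ω - B i ω| ^ p ∂μ) ^ (1 / p) *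
        ((∫ ω, ∑ i ∈ s, |A i ω| ^ p ∂μ) ^ (1 - 1 / p) +
          (∫ ω, ∑ i ∈ s, |B i ω| ^ p ∂μ) ^ (1 - 1 / p)) := by
  set VA := fun ω => ∑ i ∈ s, |A i ω| ^ p
  set VB := fun ω => ∑ i ∈ s, |B i ω| ^ p
  set VZ := fun ω => ∑ i ∈ s, |A i ω - B i ω| ^ p
  have hVZ : Integrable VZ μ := integrable_sum_abs_sub_rpow s hp.le hA hB hVA hVB
  have nonneg : ∀ C : ι → Ω → ℝ, 0 ≤ᵐ[μ] fun ω => ∑ i ∈ s, |C i ω| ^ p :=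
    fun C => ae_of_all _ fun ω => sum_nonneg fun i _ => by positivity
  have ha : 0 ≤ 1 / p := by positivity
  have hb : 0 ≤ 1 - 1 / p := by rw [sub_nonneg, div_le_one (by linarith)]; exact hp.le
  have hab : 1 / p + (1 - 1 / p) = 1 := add_sub_cancel _ _
  have hZA := hVZ.rpow_mul_rpow hVA (nonneg _) (nonneg _) ha hb hab
  have hZB := hVZ.rpow_mul_rpow hVB (nonneg _) (nonneg _) ha hb hab
  calc ∫ ω, |VA ω - VB ω| ∂μ
      ≤ ∫ ω, p * (VZ ω ^ (1 / p) * VA ω ^ (1 - 1 / p) + VZ ω ^ (1 / p) * VB ω ^ (1 - 1 / p)) ∂μ :=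
        integral_mono (hVA.sub hVB).abs ((hZA.add hZB).const_mul p)
          fun ω => Real.abs_sum_abs_rpow_sub_sum_abs_rpow_le s hp _ _
    _ = p * (∫ ω, VZ ω ^ (1 / p) * VA ω ^ (1 - 1 / p) ∂μ +
          ∫ ω, VZ ω ^ (1 / p) * VB ω ^ (1 - 1 / p) ∂μ) := by
        rw [integral_const_mul, integral_add hZA hZB]
    _ ≤ p * ((∫ ω, VZ ω ∂μ) ^ (1 / p) * (∫ ω, VA ω ∂μ) ^ (1 - 1 / p) +
          (∫ ω, VZ ω ∂μ) ^ (1 / p) * (∫ ω, VB ω ∂μ) ^ (1 - 1 / p)) := by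
        gcongr
        · exact integral_rpow_mul_rpow_le hVZ hVA (nonneg _) (nonneg _) ha hb hab
        · exact integral_rpow_mul_rpow_le hVZ hVB (nonneg _) (nonneg _) ha hb hab
    _ = _ := by ring

end FinsetSum

end MeasureTheory

noncomputable def dyadicIncrement {Ω : Type*} (T : ℝ) (n : ℕ) (X : ℝ → Ω → ℝ) (i : ℕ) (ω : Ω) :
    ℝ :=
  X (T * ((i : ℝ) + 1) / 2 ^ n) ω - X (T * (i : ℝ) / 2 ^ n) ω

lemma dyadicVariation_eq_sum {Ω : Type*} (T p : ℝ) (n : ℕ) (X : ℝ → Ω → ℝ) :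
    dyadicVariation T p n X = fun ω => ∑ i ∈ range (2 ^ n), |dyadicIncrement T n X i ω| ^ p :=
  rfl

lemma dyadicIncrement_sub {Ω : Type*} (T : ℝ) (n : ℕ) (X Y : ℝ → Ω → ℝ) (i : ℕ) (ω : Ω) :
    dyadicIncrement T n (fun t ω => X t ω - Y t ω) i ω =
      dyadicIncrement T n X i ω - dyadicIncrement T n Y i ω :=
  sub_sub_sub_comm _ _ _ _

theorem abs_expectation_dyadicVariation_sub_le_general {Ω : Type*} [MeasurableSpace Ω]
    (P : Measure Ω)
    (T p : ℝ) (n : ℕ) (hp : 1 < p)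
    (X Y : ℝ → Ω → ℝ)
    (hXmeas : ∀ t, Measurable (X t)) (hYmeas : ∀ t, Measurable (Y t))
    (hX : Integrable (dyadicVariation T p n X) P)
    (hY : Integrable (dyadicVariation T p n Y) P) :
    ∫ ω, |dyadicVariation T p n X ω - dyadicVariation T p n Y ω| ∂P ≤
      p * (∫ ω, dyadicVariation T p n (fun t ω => X t ω - Y t ω) ω ∂P) ^ (1 / p) *
        ((∫ ω, dyadicVariation T p n X ω ∂P) ^ (1 - 1 / p) +
          (∫ ω, dyadicVariation T p n Y ω ∂P) ^ (1 - 1 / p)) := by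
  simp only [dyadicVariation_eq_sum, dyadicIncrement_sub] at hX hY ⊢
  exact integral_abs_sum_abs_rpow_sub_le _ hp
    (fun _ => ((hXmeas _).sub (hXmeas _)).aestronglyMeasurable)
    (fun _ => ((hYmeas _).sub (hYmeas _)).aestronglyMeasurable) hX hY

/-- If `E V_{n,T}^p(X) < ∞` and `E V_{n,T}^p(Y) < ∞` for some `p ∈ (1,∞)`, then
`E|V_{n,T}^p(X) - V_{n,T}^p(Y)| ≤ p (E V_{n,T}^p(X-Y))^{1/p}
  ((E V_{n,T}^p(X))^{1-1/p} + (E V_{n,T}^p(Y))^{1-1/p})`. -/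
theorem abs_expectation_dyadicVariation_sub_le {Ω : Type*} [MeasurableSpace Ω]
    (P : Measure Ω) [IsProbabilityMeasure P]
    (T p : ℝ) (hT : 0 < T) (n : ℕ) (hp : 1 < p)
    (X Y : ℝ → Ω → ℝ)
    (hXmeas : ∀ t, Measurable (X t)) (hYmeas : ∀ t, Measurable (Y t))
    (hX : Integrable (dyadicVariation T p n X) P)
    (hY : Integrable (dyadicVariation T p n Y) P) :
    ∫ ω, |dyadicVariation T p n X ω - dyadicVariation T p n Y ω| ∂P ≤
      p * (∫ ω, dyadicVariation T p n (fun t ω => X t ω - Y t ω) ω ∂P) ^ (1 / p) *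
        ((∫ ω, dyadicVariation T p n X ω ∂P) ^ (1 - 1 / p) +
          (∫ ω, dyadicVariation T p n Y ω ∂P) ^ (1 - 1 / p)) :=
  abs_expectation_dyadicVariation_sub_le_general P T p n hp X Y hXmeas hYmeas hX hY
end

section
/- Let T ∈ (0, ∞), a ∈ (0, 1), ϑ ≥ 0, and ε ∈ (ϑ, a + ϑ). Then there exists a finite constant C = C(T, a, ϑ, ε) such that for every x ∈ (0, T), ∫_0^T (y + x)^{−(a + ϑ)} y^{−(1 − a)} dy ≤ C x^{−ε}. -/
/-!
Split the exponent as `a + ϑ = ε + (a + ϑ - ε)` with both parts nonnegative and bound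
`(y + x)^{-ε} ≤ x^{-ε}`, `(y + x)^{-(a + ϑ - ε)} ≤ y^{-(a + ϑ - ε)}`. What is left under the
integral is `x^{-ε} y^{ε - ϑ - 1}`, and `y^{ε - ϑ - 1}` is integrable on `(0, T)` because `ε > ϑ`.
-/

open MeasureTheory Set

lemma Real.add_rpow_neg_add_le {x y p q : ℝ} (hx : 0 < x) (hy : 0 < y) (hp : 0 ≤ p)
    (hq : 0 ≤ q) : (y + x) ^ (-(p + q)) ≤ x ^ (-p) * y ^ (-q) := by
  have hyx : 0 < y + x := by linarith
  calc (y + x) ^ (-(p + q)) = (y + x) ^ (-p) * (y + x) ^ (-q) := by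
        rw [neg_add, Real.rpow_add hyx]
    _ ≤ x ^ (-p) * y ^ (-q) := by
        gcongr ?_ * ?_
        · exact Real.rpow_le_rpow_of_nonpos hx (by linarith) (by linarith)
        · exact Real.rpow_le_rpow_of_nonpos hy (by linarith) (by linarith)

lemma setIntegral_Ioo_zero_rpow {r T : ℝ} (hr : -1 < r) (hT : 0 ≤ T) :
    ∫ y in Ioo (0 : ℝ) T, y ^ r = T ^ (r + 1) / (r + 1) := by
  rw [← integral_Ioc_eq_integral_Ioo, ← intervalIntegral.integral_of_le hT,
    integral_rpow (Or.inl hr), Real.zero_rpow (by linarith), sub_zero]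

theorem integral_rpow_add_le_general (T a ϑ ε : ℝ) (hT : 0 < T)
    (hϑ : 0 ≤ ϑ) (hε : ε ∈ Set.Ioo ϑ (a + ϑ)) :
    ∃ C : ℝ, 0 < C ∧ ∀ x ∈ Set.Ioo (0 : ℝ) T,
      (∫ y in Set.Ioo (0 : ℝ) T, (y + x) ^ (-(a + ϑ)) * y ^ (-(1 - a))) ≤ C * x ^ (-ε) := by
  obtain ⟨hϑε, hεa⟩ := hε
  set r := ε - ϑ - 1 with hr_def
  have hr : -1 < r := by linarith
  refine ⟨T ^ (r + 1) / (r + 1), div_pos (Real.rpow_pos_of_pos hT _) (by linarith), ?_⟩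
  rintro x ⟨hx, -⟩
  have hpointwise : ∀ y ∈ Ioo (0 : ℝ) T,
      (y + x) ^ (-(a + ϑ)) * y ^ (-(1 - a)) ≤ x ^ (-ε) * y ^ r := fun y ⟨hy, _⟩ ↦ calc
    (y + x) ^ (-(a + ϑ)) * y ^ (-(1 - a))
        = (y + x) ^ (-(ε + (a + ϑ - ε))) * y ^ (-(1 - a)) := by ring_nf
    _ ≤ x ^ (-ε) * y ^ (-(a + ϑ - ε)) * y ^ (-(1 - a)) := by
        gcongr
        exact Real.add_rpow_neg_add_le hx hy (by linarith) (by linarith)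
    _ = x ^ (-ε) * y ^ r := by
        rw [mul_assoc, ← Real.rpow_add hy, hr_def]
        ring_nf
  calc (∫ y in Ioo (0 : ℝ) T, (y + x) ^ (-(a + ϑ)) * y ^ (-(1 - a)))
      ≤ ∫ y in Ioo (0 : ℝ) T, x ^ (-ε) * y ^ r :=
        setIntegral_mono_of_nonneg (fun y hy ↦ by have := hy.1; positivity) hpointwise
          (((intervalIntegral.integrableOn_Ioo_rpow_iff hT).2 hr).const_mul _)
    _ = T ^ (r + 1) / (r + 1) * x ^ (-ε) := by
        rw [integral_const_mul, setIntegral_Ioo_zero_rpow hr hT.le, mul_comm]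

/-- For `T > 0`, `a ∈ (0,1)`, `ϑ ≥ 0` and `ε ∈ (ϑ, a + ϑ)`, there is a finite constant
`C` such that `∫_0^T (y+x)^{-(a+ϑ)} y^{-(1-a)} dy ≤ C x^{-ε}` for all `x ∈ (0,T)`. -/
theorem integral_rpow_add_le (T a ϑ ε : ℝ) (hT : 0 < T) (ha : a ∈ Set.Ioo (0 : ℝ) 1)
    (hϑ : 0 ≤ ϑ) (hε : ε ∈ Set.Ioo ϑ (a + ϑ)) :
    ∃ C : ℝ, 0 < C ∧ ∀ x ∈ Set.Ioo (0 : ℝ) T,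
      (∫ y in Set.Ioo (0 : ℝ) T, (y + x) ^ (-(a + ϑ)) * y ^ (-(1 - a))) ≤ C * x ^ (-ε) :=
  integral_rpow_add_le_general T a ϑ ε hT hϑ hε
end

section
/- Let T ∈ (0, ∞), a ∈ (0, 1), ϑ ≥ 0, and ε ∈ (ϑ, a + ϑ). Then lim_{x → 0+} x^ε ∫_0^T (y + x)^{−(a + ϑ)} y^{−(1 − a)} dy = 0. -/
open MeasureTheory Filter Set Topology

/-!
Since `x ≤ y + x`, the factor `x^ε` is absorbed into `(y + x)^{-(a+ϑ)}`, and as `ε ≤ a + ϑ` the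
integrand of `x^ε ∫ …` is bounded, uniformly in `x > 0`, by `y^{ε-(a+ϑ)} y^{-(1-a)} = y^{ε-ϑ-1}`,
which is integrable near `0` because `ε > ϑ`. Each integrand tends to `0` pointwise since
`ε > 0`, so dominated convergence concludes.
-/

namespace Real

lemma rpow_mul_rpow_add_neg_le {x y ε b : ℝ} (hx : 0 < x) (hy : 0 < y) (hε : 0 ≤ ε)
    (hεb : ε ≤ b) : x ^ ε * (y + x) ^ (-b) ≤ y ^ (ε - b) :=
  calc x ^ ε * (y + x) ^ (-b)
      ≤ (y + x) ^ ε * (y + x) ^ (-b) := by gcongr; linarith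
    _ = (y + x) ^ (ε - b) := by rw [← rpow_add (by linarith), sub_eq_add_neg]
    _ ≤ y ^ (ε - b) := rpow_le_rpow_of_nonpos hy (by linarith) (by linarith)

lemma tendsto_rpow_nhdsGT_zero {ε : ℝ} (hε : 0 < ε) :
    Tendsto (fun x : ℝ => x ^ ε) (𝓝[>] 0) (𝓝 0) := by
  simpa [zero_rpow hε.ne'] using
    (continuousAt_rpow_const 0 ε (Or.inr hε.le)).continuousWithinAt (s := Ioi 0) |>.tendsto

lemma tendsto_rpow_mul_integral_Ioo_rpow_add_mul_rpow {T ε b c : ℝ} (hε : 0 < ε) (hεb : ε ≤ b)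
    (hc : -1 < ε - b + c) :
    Tendsto (fun x : ℝ => x ^ ε * ∫ y in Ioo 0 T, (y + x) ^ (-b) * y ^ c) (𝓝[>] 0) (𝓝 0) := by
  simp_rw [← integral_const_mul]
  have h_bound : ∀ᶠ x in 𝓝[>] (0 : ℝ), ∀ᵐ y ∂volume.restrict (Ioo 0 T),
      ‖x ^ ε * ((y + x) ^ (-b) * y ^ c)‖ ≤ y ^ (ε - b + c) := by
    filter_upwards [self_mem_nhdsWithin] with x (hx : 0 < x)
    filter_upwards [ae_restrict_mem measurableSet_Ioo] with y ⟨hy, _⟩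
    rw [Real.norm_of_nonneg (by positivity), ← mul_assoc, rpow_add hy]
    gcongr
    exact rpow_mul_rpow_add_neg_le hx hy hε.le hεb
  have h_lim : ∀ᵐ y ∂volume.restrict (Ioo 0 T),
      Tendsto (fun x => x ^ ε * ((y + x) ^ (-b) * y ^ c)) (𝓝[>] 0) (𝓝 0) := by
    filter_upwards [ae_restrict_mem measurableSet_Ioo] with y ⟨hy, _⟩
    have h_cont : ContinuousAt (fun x : ℝ => (y + x) ^ (-b) * y ^ c) 0 :=
      ((continuousAt_const.add continuousAt_id).rpow_const (Or.inl (by simpa using hy.ne'))).mul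
        continuousAt_const
    simpa using (tendsto_rpow_nhdsGT_zero hε).mul (h_cont.tendsto.mono_left nhdsWithin_le_nhds)
  have h_int : IntegrableOn (fun y : ℝ => y ^ (ε - b + c)) (Ioo 0 T) :=
    ((intervalIntegral.intervalIntegrable_rpow' hc).1).mono_set Ioo_subset_Ioc_self
  simpa using tendsto_integral_filter_of_dominated_convergence _
    (Eventually.of_forall fun x => (by fun_prop : Measurable _).aestronglyMeasurable)
    h_bound h_int h_lim

end Real

theorem tendsto_rpow_mul_integral_zero_general (T a ϑ ε : ℝ) (hϑ : 0 ≤ ϑ) (hε : ε ∈ Set.Ioo ϑ (a + ϑ)) :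
    Tendsto
      (fun x : ℝ => x ^ ε * ∫ y in Set.Ioo (0 : ℝ) T, (y + x) ^ (-(a + ϑ)) * y ^ (-(1 - a)))
      (nhdsWithin 0 (Set.Ioi 0)) (nhds 0) :=
  Real.tendsto_rpow_mul_integral_Ioo_rpow_add_mul_rpow (by linarith [hε.1]) hε.2.le
    (by linarith [hε.1])

/-- For `T > 0`, `a ∈ (0,1)`, `ϑ ≥ 0` and `ε ∈ (ϑ, a + ϑ)`,
`x^ε ∫_0^T (y+x)^{-(a+ϑ)} y^{-(1-a)} dy → 0` as `x → 0+`. -/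
theorem tendsto_rpow_mul_integral_zero (T a ϑ ε : ℝ) (hT : 0 < T)
    (ha : a ∈ Set.Ioo (0 : ℝ) 1) (hϑ : 0 ≤ ϑ) (hε : ε ∈ Set.Ioo ϑ (a + ϑ)) :
    Tendsto
      (fun x : ℝ => x ^ ε * ∫ y in Set.Ioo (0 : ℝ) T, (y + x) ^ (-(a + ϑ)) * y ^ (-(1 - a)))
      (nhdsWithin 0 (Set.Ioi 0)) (nhds 0) :=
  tendsto_rpow_mul_integral_zero_general T a ϑ ε hϑ hε
end
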